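/- arXiv:0812.0569 — 4 statements merged into one kernel-verified Lean document; each statement's English description precedes it below -/
import Mathlib

section
/- For all integers 1 ≤ a ≤ b ≤ n, the expected number of indices in cycles of length between a and b satisfies E_n(N_{a,b}) = ∑_{j=a}^{b} e^{−α_j} h_{n−j}/h_n. -/
open Finset Filter

/-- Length of the cycle of `π` containing `i` (1 for fixed points). -/
noncomputable def cycleLen {n : ℕ} (π : Equiv.Perm (Fin n)) (i : Fin n) : ℕ :=
  Function.minimalPeriod π i

/-- `numCycles π ℓ` = number of cycles of `π` of length `ℓ` (counting fixed points as 1-cycles). -/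
noncomputable def numCycles {n : ℕ} (π : Equiv.Perm (Fin n)) (ℓ : ℕ) : ℕ :=
  (Finset.univ.filter fun i => cycleLen π i = ℓ).card / ℓ

/-- The total cycle weight `∑_ℓ α_ℓ r_ℓ(π)`. -/
noncomputable def cycleWeight (α : ℕ → ℝ) {n : ℕ} (π : Equiv.Perm (Fin n)) : ℝ :=
  ∑ ℓ ∈ Finset.Icc 1 n, α ℓ * (numCycles π ℓ : ℝ)

/-- The normalization `h_n = (1/n!) ∑_{π ∈ S_n} exp(-∑_ℓ α_ℓ r_ℓ(π))`; `h_0 = 1`. -/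
noncomputable def hseq (α : ℕ → ℝ) (n : ℕ) : ℝ :=
  (1 / (n.factorial : ℝ)) * ∑ π : Equiv.Perm (Fin n), Real.exp (-(cycleWeight α π))

/-- `N_{a,b}(π) = ∑_{ℓ=a}^b ℓ r_ℓ(π)`, the number of indices in cycles of length between `a` and `b`. -/
noncomputable def Nab {n : ℕ} (a b : ℕ) (π : Equiv.Perm (Fin n)) : ℕ :=
  ∑ ℓ ∈ Finset.Icc a b, ℓ * numCycles π ℓ

/-- Expectation under `p_n(π) = exp(-∑_ℓ α_ℓ r_ℓ(π)) / (h_n n!)`. -/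
noncomputable def En (α : ℕ → ℝ) (n : ℕ) (f : Equiv.Perm (Fin n) → ℝ) : ℝ :=
  (∑ π : Equiv.Perm (Fin n), f π * Real.exp (-(cycleWeight α π))) / (hseq α n * (n.factorial : ℝ))



/-!
Double counting. Since `ℓ r_ℓ(π)` is the number of points of `π` of period `ℓ`, the quantity
`n! h_n E_n(N_{a,b})` is the total weight of the pairs `(π, i)` in which `i` has period
`j ∈ [a, b]`. Such a pair is the same as an injection `g : Fin j ↪ Fin n` listing the cycle of
`i = g 0`, together with a permutation `σ` of the `n - j` points off that cycle, and the weight of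
`π` is `e^{-α_j}` times the weight of `σ`. Summing over `σ` gives `(n - j)! h_{n-j}`, and there are
`n! / (n - j)!` injections, so each `j` contributes `e^{-α_j} h_{n-j} / h_n`.
-/

open Function Equiv

theorem Function.Semiconj.minimalPeriod_eq {α β : Type*} {fa : α → α} {fb : β → β}
    {g : α → β} (h : Semiconj g fa fb) (hg : Injective g) (x : α) :
    minimalPeriod fb (g x) = minimalPeriod fa x :=
  minimalPeriod_eq_minimalPeriod_iff.2 fun n => by
    simp only [IsPeriodicPt, IsFixedPt, ← h.iterate_right n x, hg.eq_iff]

theorem Equiv.Perm.minimalPeriod_permCongr {β γ : Type*} (e : β ≃ γ) (π : Perm β) (x : β) :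
    minimalPeriod (e.permCongr π) (e x) = minimalPeriod π x :=
  Semiconj.minimalPeriod_eq (fun y => by simp [permCongr_apply]) e.injective x

open Fin.NatCast in
theorem iterate_finRotate_apply {j : ℕ} [NeZero j] (m : ℕ) (k : Fin j) :
    (finRotate j)^[m] k = k + (m : Fin j) := by
  induction m with
  | zero => simp
  | succ m ih => rw [iterate_succ_apply', ih, finRotate_apply, Nat.cast_succ, add_assoc]

open Fin.NatCast in
theorem minimalPeriod_finRotate {j : ℕ} (k : Fin j) : minimalPeriod (finRotate j) k = j := by
  have := k.neZero
  refine Nat.dvd_right_iff_eq.1 fun m => ?_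
  rw [← isPeriodicPt_iff_minimalPeriod_dvd, IsPeriodicPt, IsFixedPt, iterate_finRotate_apply,
    add_eq_left, Fin.natCast_eq_zero]

theorem Equiv.Perm.dvd_card_filter_minimalPeriod_eq {β : Type*} [Fintype β] [DecidableEq β]
    (π : Perm β) (j : ℕ) : j ∣ #{i | minimalPeriod π i = j} := by
  classical
  -- the orbits of `⟨π⟩` cut the points of period `j` into blocks of size `j`
  let orb : β → Set β := fun x => MulAction.orbit (Subgroup.zpowers π) x
  have card_orb (x : β) : Fintype.card (orb x) = minimalPeriod π x :=
    (MulAction.minimalPeriod_eq_card π x).symm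
  rw [card_eq_sum_card_fiberwise (f := orb) (t := Finset.image orb _)
    fun x hx => mem_image_of_mem orb hx]
  refine dvd_sum fun O hO => ?_
  obtain ⟨x, hx, rfl⟩ := Finset.mem_image.1 hO
  simp only [mem_filter, mem_univ, true_and] at hx
  have fiber : ({y ∈ {i | minimalPeriod π i = j} | orb y = orb x} : Finset β) =
      (orb x).toFinset := by
    ext y
    simp only [mem_filter, mem_univ, true_and, Set.mem_toFinset]
    refine ⟨fun h => MulAction.orbit_eq_iff.1 h.2, fun h => ⟨?_, MulAction.orbit_eq_iff.2 h⟩⟩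
    rw [← hx, ← card_orb, ← card_orb, show orb y = orb x from MulAction.orbit_eq_iff.2 h]
  rw [fiber, Set.toFinset_card, card_orb, hx]

theorem mul_numCycles {n : ℕ} (π : Perm (Fin n)) (ℓ : ℕ) :
    ℓ * numCycles π ℓ = #{i | minimalPeriod π i = ℓ} :=
  Nat.mul_div_cancel' (π.dvd_card_filter_minimalPeriod_eq ℓ)

/-- `∑_ℓ α_ℓ r_ℓ(π)` as a sum over points: each point of an `ℓ`-cycle carries `α_ℓ / ℓ`. -/
noncomputable def Equiv.Perm.weight {β : Type*} [Fintype β] (α : ℕ → ℝ) (π : Perm β) : ℝ :=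
  ∑ i, α (minimalPeriod π i) / minimalPeriod π i

theorem Equiv.Perm.weight_permCongr {β γ : Type*} [Fintype β] [Fintype γ] (α : ℕ → ℝ)
    (e : β ≃ γ) (π : Perm β) : (e.permCongr π).weight α = π.weight α :=
  (Fintype.sum_equiv e _ _ fun x => by rw [minimalPeriod_permCongr]).symm

theorem cycleWeight_eq_weight (α : ℕ → ℝ) {n : ℕ} (π : Perm (Fin n)) :
    cycleWeight α π = π.weight α := by
  have maps_to (i : Fin n) : minimalPeriod π i ∈ Icc 1 n := by
    simpa using ⟨minimalPeriod_pos_of_mem_periodicPts (π.injective.mem_periodicPts i),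
      by simpa using minimalPeriod_le_card (f := π) (x := i)⟩
  rw [Perm.weight, ← sum_fiberwise_of_maps_to (fun i _ => maps_to i)]
  refine sum_congr rfl fun ℓ hℓ => ?_
  have hℓ0 : (ℓ : ℝ) ≠ 0 := by have := (mem_Icc.1 hℓ).1; positivity
  rw [numCycles]
  unfold cycleLen
  rw [Nat.cast_div (π.dvd_card_filter_minimalPeriod_eq ℓ) hℓ0,
    sum_congr rfl fun i hi => by rw [(mem_filter.1 hi).2], sum_const, nsmul_eq_mul]
  ring

theorem hseq_pos (α : ℕ → ℝ) (n : ℕ) : 0 < hseq α n :=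
  mul_pos (by positivity) (sum_pos (fun π _ => Real.exp_pos _) univ_nonempty)

theorem Equiv.Perm.sum_exp_neg_weight (α : ℕ → ℝ) (β : Type*) [Fintype β] [DecidableEq β] :
    ∑ σ : Perm β, Real.exp (-σ.weight α) =
      (Fintype.card β).factorial * hseq α (Fintype.card β) := by
  calc ∑ σ : Perm β, Real.exp (-σ.weight α)
      = ∑ τ : Perm (Fin (Fintype.card β)), Real.exp (-cycleWeight α τ) :=
        Fintype.sum_equiv (Fintype.equivFin β).permCongr _ _ fun σ => by
          rw [cycleWeight_eq_weight, weight_permCongr]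
    _ = _ := by rw [hseq]; field_simp

namespace Function.Embedding

variable {β ι : Type*} [DecidableEq β] [Fintype ι]

theorem card_compl_range [Fintype β] (g : ι ↪ β) :
    Fintype.card {x // x ∉ Set.range g} = Fintype.card β - Fintype.card ι := by
  rw [Fintype.card_subtype_compl, Set.card_range_of_injective g.injective]

noncomputable def rangeSumComplEquiv (g : ι ↪ β) : ι ⊕ {x // x ∉ Set.range g} ≃ β :=
  ((Equiv.ofInjective g g.injective).sumCongr (Equiv.refl _)).trans
    (Equiv.Set.sumCompl (Set.range g))

theorem rangeSumComplEquiv_inl (g : ι ↪ β) (k : ι) : g.rangeSumComplEquiv (Sum.inl k) = g k :=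
  Equiv.Set.sumCompl_apply_inl _ _

theorem rangeSumComplEquiv_inr (g : ι ↪ β) (y : {x // x ∉ Set.range g}) :
    g.rangeSumComplEquiv (Sum.inr y) = y :=
  Equiv.Set.sumCompl_apply_inr _ _

end Function.Embedding

namespace Equiv.Perm

section attachCycle

variable {β : Type*} [DecidableEq β] {j : ℕ}

/-- The permutation running through the cycle `g 0 ↦ g 1 ↦ ⋯ ↦ g (j - 1) ↦ g 0` and acting as `σ`
off the range of `g`. -/
noncomputable def attachCycle (g : Fin j ↪ β) (σ : Perm {x // x ∉ Set.range g}) : Perm β :=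
  g.rangeSumComplEquiv.permCongr (sumCongr (finRotate j) σ)

variable (g : Fin j ↪ β) (σ : Perm {x // x ∉ Set.range g})

theorem attachCycle_apply_rangeSumComplEquiv (z : Fin j ⊕ {x // x ∉ Set.range g}) :
    attachCycle g σ (g.rangeSumComplEquiv z) =
      g.rangeSumComplEquiv (sumCongr (finRotate j) σ z) := by
  rw [attachCycle, permCongr_apply, symm_apply_apply]

theorem semiconj_embedding_attachCycle : Semiconj g (finRotate j) (attachCycle g σ) := fun k => by
  simpa only [Embedding.rangeSumComplEquiv_inl, sumCongr_apply, Sum.map_inl] using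
    (attachCycle_apply_rangeSumComplEquiv g σ (Sum.inl k)).symm

theorem semiconj_coe_attachCycle : Semiconj Subtype.val σ (attachCycle g σ) := fun y => by
  simpa only [Embedding.rangeSumComplEquiv_inr, sumCongr_apply, Sum.map_inr] using
    (attachCycle_apply_rangeSumComplEquiv g σ (Sum.inr y)).symm

theorem minimalPeriod_attachCycle_embedding (k : Fin j) :
    minimalPeriod (attachCycle g σ) (g k) = j := by
  rw [(semiconj_embedding_attachCycle g σ).minimalPeriod_eq g.injective, minimalPeriod_finRotate]

theorem weight_attachCycle [Fintype β] [NeZero j] (α : ℕ → ℝ) :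
    (attachCycle g σ).weight α = α j + σ.weight α := by
  rw [weight, ← g.rangeSumComplEquiv.sum_comp, Fintype.sum_sum_type]
  simp only [Embedding.rangeSumComplEquiv_inl, Embedding.rangeSumComplEquiv_inr,
    minimalPeriod_attachCycle_embedding,
    (semiconj_coe_attachCycle g σ).minimalPeriod_eq Subtype.val_injective, sum_const, card_univ,
    Fintype.card_fin, nsmul_eq_mul]
  rw [weight]
  field_simp [NeZero.ne j]

open Fin.NatCast in
theorem embedding_eq_iterate_attachCycle [NeZero j] (k : Fin j) :
    g k = (attachCycle g σ)^[k] (g 0) := by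
  rw [← (semiconj_embedding_attachCycle g σ).iterate_right, iterate_finRotate_apply, zero_add,
    Fin.cast_val_eq_self]

end attachCycle

section iterateEmbedding

variable {β : Type*}

def iterateEmbedding (π : Perm β) (i : β) : Fin (minimalPeriod π i) ↪ β :=
  ⟨fun k => π^[k] i, fun a b h => Fin.ext (iterate_injOn_Iio_minimalPeriod a.2 b.2 h)⟩

variable [Finite β] (π : Perm β) (i : β)

theorem mem_range_iterateEmbedding {y : β} :
    y ∈ Set.range (iterateEmbedding π i) ↔ π.SameCycle i y := by
  constructor
  · rintro ⟨k, rfl⟩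
    exact ⟨k, by simp [iterateEmbedding, iterate_eq_pow]⟩
  · intro h
    obtain ⟨m, rfl⟩ := h.exists_nat_pow_eq
    have hpos := minimalPeriod_pos_of_mem_periodicPts (π.injective.mem_periodicPts i)
    refine ⟨⟨m % minimalPeriod π i, Nat.mod_lt _ hpos⟩, ?_⟩
    change π^[m % minimalPeriod π i] i = (π ^ m) i
    rw [iterate_mod_minimalPeriod_eq, iterate_eq_pow]

theorem apply_mem_range_iterateEmbedding_iff (x : β) :
    π x ∈ Set.range (iterateEmbedding π i) ↔ x ∈ Set.range (iterateEmbedding π i) := by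
  simp only [mem_range_iterateEmbedding, sameCycle_apply_right]

theorem attachCycle_iterateEmbedding [DecidableEq β] :
    attachCycle (iterateEmbedding π i)
      (π.subtypePerm fun x => (apply_mem_range_iterateEmbedding_iff π i x).not) = π := by
  ext x
  by_cases hx : x ∈ Set.range (iterateEmbedding π i)
  · obtain ⟨k, rfl⟩ := hx
    have := k.neZero
    rw [← semiconj_embedding_attachCycle _ _ k]
    change π^[(finRotate _ k : ℕ)] i = π (π^[k] i)
    rw [finRotate_apply, Fin.val_add, Fin.val_one', Nat.add_mod_mod, iterate_mod_minimalPeriod_eq,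
      iterate_succ_apply']
  · exact (semiconj_coe_attachCycle _ _ ⟨x, hx⟩).symm

end iterateEmbedding

section count

variable {β : Type*} [DecidableEq β] (j : ℕ) [NeZero j]

noncomputable def attachCycleAt :
    (Σ g : Fin j ↪ β, Perm {x // x ∉ Set.range g}) →
      {p : Perm β × β // minimalPeriod p.1 p.2 = j} :=
  fun gσ => ⟨(attachCycle gσ.1 gσ.2, gσ.1 0), minimalPeriod_attachCycle_embedding _ _ _⟩

theorem attachCycleAt_injective : Injective (attachCycleAt (β := β) j) := by
  rintro ⟨g₁, σ₁⟩ ⟨g₂, σ₂⟩ h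
  simp only [attachCycleAt, Subtype.mk.injEq, Prod.mk.injEq] at h
  obtain ⟨hπ, h0⟩ := h
  obtain rfl : g₁ = g₂ := DFunLike.ext _ _ fun k => by
    rw [embedding_eq_iterate_attachCycle g₁ σ₁, embedding_eq_iterate_attachCycle g₂ σ₂, hπ, h0]
  obtain rfl : σ₁ = σ₂ := Equiv.ext fun y => Subtype.ext <| by
    rw [semiconj_coe_attachCycle g₁ σ₁ y, semiconj_coe_attachCycle g₁ σ₂ y, hπ]
  rfl

theorem attachCycleAt_surjective [Finite β] : Surjective (attachCycleAt (β := β) j) := by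
  rintro ⟨⟨π, i⟩, hπ : minimalPeriod π i = j⟩
  subst hπ
  exact ⟨⟨_, _⟩, Subtype.ext (Prod.ext (attachCycle_iterateEmbedding π i) rfl)⟩

theorem sum_card_filter_minimalPeriod_mul_exp [Fintype β] (α : ℕ → ℝ) :
    ∑ π : Perm β, (#{i | minimalPeriod π i = j} : ℝ) * Real.exp (-π.weight α) =
      (Fintype.card β).descFactorial j *
        (Real.exp (-α j) * ((Fintype.card β - j).factorial * hseq α (Fintype.card β - j))) := by
  calc ∑ π : Perm β, (#{i | minimalPeriod π i = j} : ℝ) * Real.exp (-π.weight α)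
      = ∑ p : {p : Perm β × β // minimalPeriod p.1 p.2 = j}, Real.exp (-p.1.1.weight α) := by
        rw [← sum_subtype {p : Perm β × β | minimalPeriod p.1 p.2 = j} (by simp)
          (fun p => Real.exp (-p.1.weight α)), sum_filter, Fintype.sum_prod_type]
        refine sum_congr rfl fun π _ => ?_
        simp only [← sum_filter, sum_const, nsmul_eq_mul]
    _ = ∑ gσ : Σ g : Fin j ↪ β, Perm {x // x ∉ Set.range g},
          Real.exp (-(attachCycle gσ.1 gσ.2).weight α) :=
        (Fintype.sum_bijective _ ⟨attachCycleAt_injective j, attachCycleAt_surjective j⟩ _ _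
          fun _ => rfl).symm
    _ = ∑ _g : Fin j ↪ β,
          Real.exp (-α j) * ((Fintype.card β - j).factorial * hseq α (Fintype.card β - j)) := by
        rw [Fintype.sum_sigma]
        refine sum_congr rfl fun g _ => ?_
        simp only [weight_attachCycle, neg_add, Real.exp_add, ← mul_sum, sum_exp_neg_weight,
          Embedding.card_compl_range, Fintype.card_fin]
    _ = _ := by
        rw [sum_const, card_univ, Fintype.card_embedding_eq, Fintype.card_fin, nsmul_eq_mul]

end count

end Equiv.Perm

theorem En_sum (α : ℕ → ℝ) (n : ℕ) {ι : Type*} (s : Finset ι) (f : ι → Perm (Fin n) → ℝ) :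
    En α n (fun π => ∑ j ∈ s, f j π) = ∑ j ∈ s, En α n (f j) := by
  simp only [En, sum_mul, ← sum_div]
  rw [sum_comm]

theorem En_card_filter_minimalPeriod_eq (α : ℕ → ℝ) {n j : ℕ} [NeZero j] (hjn : j ≤ n) :
    En α n (fun π => (#{i | minimalPeriod π i = j} : ℝ)) =
      Real.exp (-α j) * (hseq α (n - j) / hseq α n) := by
  have hfac : ((n - j).factorial : ℝ) * n.descFactorial j = n.factorial := by
    exact_mod_cast Nat.factorial_mul_descFactorial hjn
  have := hseq_pos α n
  simp only [En, cycleWeight_eq_weight, Perm.sum_card_filter_minimalPeriod_mul_exp,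
    Fintype.card_fin]
  field_simp
  linear_combination hseq α (n - j) * hfac

theorem Nab_eq_sum_card_filter_minimalPeriod {n : ℕ} (a b : ℕ) (π : Perm (Fin n)) :
    Nab a b π = ∑ j ∈ Icc a b, #{i | minimalPeriod π i = j} :=
  sum_congr rfl fun j _ => mul_numCycles π j

theorem stmt1_general (α : ℕ → ℝ) (n a b : ℕ) (ha : 1 ≤ a) (hbn : b ≤ n) :
    En α n (fun π => (Nab a b π : ℝ)) =
      ∑ j ∈ Finset.Icc a b, Real.exp (-α j) * (hseq α (n - j) / hseq α n) := by
  simp only [Nab_eq_sum_card_filter_minimalPeriod, Nat.cast_sum, En_sum]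
  refine sum_congr rfl fun j hj => ?_
  obtain ⟨haj, hjb⟩ := mem_Icc.1 hj
  have : NeZero j := ⟨by omega⟩
  exact En_card_filter_minimalPeriod_eq α (hjb.trans hbn)

/-- `E_n(N_{a,b}) = ∑_{j=a}^b e^{-α_j} h_{n-j}/h_n` for `1 ≤ a ≤ b ≤ n`. -/
theorem stmt1 (α : ℕ → ℝ) (n a b : ℕ) (ha : 1 ≤ a) (hab : a ≤ b) (hbn : b ≤ n) :
    En α n (fun π => (Nab a b π : ℝ)) =
      ∑ j ∈ Finset.Icc a b, Real.exp (-α j) * (hseq α (n - j) / hseq α n) :=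
  stmt1_general α n a b ha hbn
end

section
/- For every n ≥ 1, the increments of h_n satisfy h_n − h_{n−1} = ∑_{k=1}^{n} (1/k!) ∑_{ℓ_1,…,ℓ_k ≥ 1, ℓ_1+…+ℓ_k = n} ∏_{i=1}^{k} (e^{−α_{ℓ_i}} − 1)/ℓ_i, and consequently h_n = ∑_{k=0}^{n} (1/k!) ∑_{ℓ_1,…,ℓ_k ≥ 1, ℓ_1+…+ℓ_k ≤ n} ∏_{i=1}^{k} (e^{−α_{ℓ_i}} − 1)/ℓ_i (the k = 0 term being 1). -/
open Finset Filter

/-!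
Splitting a permutation of `{0, …, n}` according to the length `ℓ` of the cycle through `0`
gives the recursion `n h_n = ∑_{ℓ=1}^n e^{-α_ℓ} h_{n-ℓ}`, `h_0 = 1`; the cycle through `0` is
built one point at a time with `Equiv.Perm.decomposeFin`, each step inserting `0` into the cycle
of another point and lengthening that cycle by one.

In generating functions the recursion says `∑ h_n x^n = exp (∑_ℓ e^{-α_ℓ} x^ℓ / ℓ)
= (1 - x)⁻¹ exp (∑_ℓ (e^{-α_ℓ} - 1) x^ℓ / ℓ)`. Expanding the last exponential, its coefficients
`a_m` satisfy `m a_m = ∑_{ℓ=1}^m (e^{-α_ℓ} - 1) a_{m-ℓ}`, so the partial sums of `a` obey the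
recursion of `h` and therefore equal `h`; in particular `h_n - h_{n-1} = a_n`.
-/
open Function Equiv

lemma minimalPeriod_map_eq {α β : Type*} {f : α → α} {g : β → β} {e : α → β}
    (he : Injective e) {x : α} (h : ∀ k, g^[k] (e x) = e (f^[k] x)) :
    minimalPeriod g (e x) = minimalPeriod f x :=
  minimalPeriod_eq_minimalPeriod_iff.2 fun k => by
    simp only [IsPeriodicPt, IsFixedPt, h, he.eq_iff]

section CycleLen

variable {n : ℕ} (π : Perm (Fin n))

lemma cycleLen_pos (i : Fin n) : 0 < cycleLen π i :=
  minimalPeriod_pos_of_mem_periodicPts (π.injective.mem_periodicPts i)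

lemma cycleLen_le (i : Fin n) : cycleLen π i ≤ n := by
  simpa [cycleLen] using minimalPeriod_le_card (f := ⇑π) (x := i)

lemma sameCycle_iff_exists_iterate {i j : Fin n} :
    π.SameCycle i j ↔ ∃ k < cycleLen π i, π^[k] i = j := by
  constructor
  · intro h
    obtain ⟨k, -, hk⟩ := h.exists_pow_eq'
    refine ⟨k % cycleLen π i, Nat.mod_lt _ (cycleLen_pos π i), ?_⟩
    rwa [cycleLen, iterate_mod_minimalPeriod_eq, ← Perm.coe_pow]
  · rintro ⟨k, -, rfl⟩
    exact ⟨k, by rw [zpow_natCast, Perm.coe_pow]⟩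

lemma cycleLen_of_sameCycle {i j : Fin n} (h : π.SameCycle i j) :
    cycleLen π j = cycleLen π i := by
  obtain ⟨k, -, rfl⟩ := (sameCycle_iff_exists_iterate π).1 h
  exact minimalPeriod_apply_iterate (π.injective.mem_periodicPts i) k

lemma card_sameCycle (i : Fin n) : #{j | π.SameCycle i j} = cycleLen π i := by
  have horbit : ({j | π.SameCycle i j} : Finset (Fin n)) =
      (range (cycleLen π i)).image (π^[·] i) := by
    ext j
    simp [sameCycle_iff_exists_iterate]
  rw [horbit, card_image_of_injOn, card_range]
  intro a ha b hb hab
  exact iterate_injOn_Iio_minimalPeriod (by simpa [cycleLen] using ha)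
    (by simpa [cycleLen] using hb) hab

lemma card_cycleLen_eq {ℓ : ℕ} (hℓ : 0 < ℓ) :
    #{i | cycleLen π i = ℓ} = ℓ * numCycles π ℓ := by
  set S : Finset (Fin n) := {i | cycleLen π i = ℓ}
  let orbit : Fin n → Finset (Fin n) := fun i => {j | π.SameCycle i j}
  have hfiber : ∀ t ∈ S.image orbit, #{i ∈ S | orbit i = t} = ℓ := by
    simp only [mem_image]
    rintro _ ⟨i, hi, rfl⟩
    have : ({a ∈ S | orbit a = orbit i} : Finset (Fin n)) = orbit i := by
      ext a
      simp only [S, orbit, mem_filter, mem_univ, true_and, Finset.ext_iff] at hi ⊢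
      exact ⟨fun ⟨_, h⟩ => (h a).1 .rfl,
        fun h => ⟨(cycleLen_of_sameCycle π h).trans hi, fun _ => ⟨h.trans, h.symm.trans⟩⟩⟩
    rw [this, card_sameCycle]
    simpa [S] using hi
  have hS : #S = #(S.image orbit) * ℓ := by
    rw [card_eq_sum_card_image orbit S, sum_const_nat hfiber]
  rw [numCycles, hS, Nat.mul_div_cancel _ hℓ, mul_comm]

lemma cycleWeight_eq_sum (α : ℕ → ℝ) :
    cycleWeight α π = ∑ i, α (cycleLen π i) / cycleLen π i := by
  rw [cycleWeight, ← sum_fiberwise_of_maps_to (g := cycleLen π) (t := Icc 1 n)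
    fun i _ => mem_Icc.2 ⟨cycleLen_pos π i, cycleLen_le π i⟩]
  refine sum_congr rfl fun ℓ hℓ => ?_
  have hℓ0 : 0 < ℓ := (mem_Icc.1 hℓ).1
  rw [sum_congr rfl fun i hi => by rw [(mem_filter.1 hi).2], sum_const, nsmul_eq_mul,
    card_cycleLen_eq π hℓ0]
  push_cast
  field_simp

end CycleLen

lemma cycleLen_conj {n : ℕ} (σ π : Perm (Fin n)) (i : Fin n) :
    cycleLen (σ * π * σ⁻¹) (σ i) = cycleLen π i :=
  minimalPeriod_map_eq σ.injective fun k =>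
    ((show Semiconj σ π ⇑(σ * π * σ⁻¹) from fun x => by simp).iterate_right k i).symm

lemma cycleWeight_conj (α : ℕ → ℝ) {n : ℕ} (σ π : Perm (Fin n)) :
    cycleWeight α (σ * π * σ⁻¹) = cycleWeight α π := by
  rw [cycleWeight_eq_sum, cycleWeight_eq_sum, ← Equiv.sum_comp σ]
  simp only [cycleLen_conj]

section DecomposeFin

/- `decomposeFin.symm (0, τ)` fixes `0` and acts as `τ` on `Fin.succ`, while
`decomposeFin.symm (q.succ, τ)` sends `0 ↦ q.succ` and the `τ`-preimage of `q` to `0`: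
it splices `0` into the cycle of `q`. -/

open Perm

variable {m : ℕ} (τ : Perm (Fin m))

lemma cycleLen_decomposeFin_symm_zero_zero : cycleLen (decomposeFin.symm (0, τ)) 0 = 1 :=
  minimalPeriod_eq_one_iff_isFixedPt.2 (decomposeFin_symm_apply_zero 0 τ)

lemma cycleLen_decomposeFin_symm_zero_succ (x : Fin m) :
    cycleLen (decomposeFin.symm (0, τ)) x.succ = cycleLen τ x :=
  minimalPeriod_map_eq (Fin.succ_injective _) fun k =>
    ((show Semiconj Fin.succ τ (decomposeFin.symm (0, τ)) from fun y => by
      simp [decomposeFin_symm_apply_succ]).iterate_right k x).symm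

lemma cycleWeight_decomposeFin_symm_zero (α : ℕ → ℝ) :
    cycleWeight α (decomposeFin.symm (0, τ)) = α 1 + cycleWeight α τ := by
  simp [cycleWeight_eq_sum, Fin.sum_univ_succ, cycleLen_decomposeFin_symm_zero_zero,
    cycleLen_decomposeFin_symm_zero_succ]

variable (q : Fin m)

lemma decomposeFin_symm_succ_apply_succ {x : Fin m} :
    decomposeFin.symm (q.succ, τ) x.succ = if τ x = q then 0 else (τ x).succ := by
  rw [decomposeFin_symm_apply_succ]
  split_ifs with h
  · rw [h, swap_apply_right]
  · exact swap_apply_of_ne_of_ne (Fin.succ_ne_zero _) (by simpa using h)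

lemma iterate_decomposeFin_symm_succ_zero {k : ℕ} (hk : k < cycleLen τ q) :
    (decomposeFin.symm (q.succ, τ))^[k + 1] 0 = (τ^[k] q).succ := by
  induction k with
  | zero => exact decomposeFin_symm_apply_zero _ τ
  | succ k ih =>
    have hne : τ^[k + 1] q ≠ q :=
      not_isPeriodicPt_of_pos_of_lt_minimalPeriod k.succ_ne_zero hk
    rw [iterate_succ_apply', ih (by omega), decomposeFin_symm_succ_apply_succ,
      ← iterate_succ_apply' τ, if_neg hne]

lemma cycleLen_decomposeFin_symm_succ_zero :
    cycleLen (decomposeFin.symm (q.succ, τ)) 0 = cycleLen τ q + 1 := by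
  set π := decomposeFin.symm (q.succ, τ)
  obtain ⟨L, hL⟩ : ∃ L, cycleLen τ q = L + 1 := Nat.exists_eq_add_one.2 (cycleLen_pos τ q)
  have hperiodic : IsPeriodicPt π (L + 2) 0 := by
    have hq : τ (τ^[L] q) = q := by
      have h : τ^[cycleLen τ q] q = q := iterate_minimalPeriod
      rwa [hL, iterate_succ_apply'] at h
    rw [IsPeriodicPt, IsFixedPt, iterate_succ_apply', iterate_decomposeFin_symm_succ_zero τ q
      (by omega), decomposeFin_symm_succ_apply_succ, if_pos hq]
  have hle : cycleLen π 0 ≤ L + 2 := hperiodic.minimalPeriod_le (by omega)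
  by_contra hne
  obtain ⟨k, hk⟩ := Nat.exists_eq_add_one.2 (cycleLen_pos π 0)
  have hfix : π^[k + 1] 0 = 0 := hk ▸ iterate_minimalPeriod
  rw [iterate_decomposeFin_symm_succ_zero τ q (by omega)] at hfix
  exact Fin.succ_ne_zero _ hfix

lemma cycleLen_decomposeFin_symm_succ_succ_of_sameCycle {x : Fin m} (h : τ.SameCycle q x) :
    cycleLen (decomposeFin.symm (q.succ, τ)) x.succ = cycleLen τ q + 1 := by
  obtain ⟨k, hk, rfl⟩ := (sameCycle_iff_exists_iterate τ).1 h
  rw [← iterate_decomposeFin_symm_succ_zero τ q hk, cycleLen,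
    minimalPeriod_apply_iterate ((decomposeFin.symm _).injective.mem_periodicPts 0)]
  exact cycleLen_decomposeFin_symm_succ_zero τ q

lemma cycleLen_decomposeFin_symm_succ_succ_of_not_sameCycle {x : Fin m}
    (h : ¬τ.SameCycle q x) :
    cycleLen (decomposeFin.symm (q.succ, τ)) x.succ = cycleLen τ x := by
  refine minimalPeriod_map_eq (Fin.succ_injective _) fun k => ?_
  induction k with
  | zero => rfl
  | succ k ih =>
    have hne : τ (τ^[k] x) ≠ q := fun hq =>
      h (Perm.SameCycle.symm ⟨(k + 1 : ℕ), by rw [zpow_natCast, Perm.coe_pow,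
        iterate_succ_apply', hq]⟩)
    rw [iterate_succ_apply', ih, decomposeFin_symm_succ_apply_succ, if_neg hne,
      iterate_succ_apply']

lemma cycleWeight_decomposeFin_symm_succ (α : ℕ → ℝ) :
    cycleWeight α (decomposeFin.symm (q.succ, τ)) =
      cycleWeight α τ + α (cycleLen τ q + 1) - α (cycleLen τ q) := by
  rw [cycleWeight_eq_sum, cycleWeight_eq_sum, Fin.sum_univ_succ,
    cycleLen_decomposeFin_symm_succ_zero]
  set L := cycleLen τ q with hL
  set β : ℕ → ℝ := fun ℓ => α ℓ / ℓ
  change β (L + 1) + ∑ x : Fin m, β (cycleLen (decomposeFin.symm (q.succ, τ)) x.succ) =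
    ∑ x, β (cycleLen τ x) + α (L + 1) - α L
  have hβ : ∀ ℓ : ℕ, 0 < ℓ → ℓ * β ℓ = α ℓ := fun ℓ hℓ => by
    simp only [β]
    field_simp
  have hdiff : ∀ x, β (cycleLen (decomposeFin.symm (q.succ, τ)) x.succ) - β (cycleLen τ x) =
      if τ.SameCycle q x then β (L + 1) - β L else 0 := by
    intro x
    split_ifs with h
    · rw [cycleLen_decomposeFin_symm_succ_succ_of_sameCycle τ q h, cycleLen_of_sameCycle τ h]
    · rw [cycleLen_decomposeFin_symm_succ_succ_of_not_sameCycle τ q h, sub_self]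
  have hsum := sum_congr rfl fun x (_ : x ∈ univ) => hdiff x
  rw [sum_sub_distrib, ← sum_filter, sum_const, card_sameCycle, ← hL, nsmul_eq_mul] at hsum
  have h1 := hβ (L + 1) L.succ_pos
  have h2 := hβ L (cycleLen_pos τ q)
  push_cast at h1
  clear_value β
  linear_combination hsum + h1 - h2

end DecomposeFin

section PermutationSums

open Perm
open scoped Nat

variable (α : ℕ → ℝ)

lemma sum_exp_neg_cycleWeight (n : ℕ) :
    ∑ π : Perm (Fin n), Real.exp (-cycleWeight α π) = n ! * hseq α n := by
  rw [hseq, ← mul_assoc, mul_one_div_cancel (by positivity), one_mul]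

lemma hseq_zero : hseq α 0 = 1 := by
  simp [hseq, cycleWeight]

noncomputable def cycleLenWeight {n : ℕ} (i : Fin n) (ℓ : ℕ) : ℝ :=
  ∑ π : Perm (Fin n) with cycleLen π i = ℓ, Real.exp (-cycleWeight α π)

lemma sum_cycleLenWeight {n : ℕ} (i : Fin n) :
    ∑ ℓ ∈ Icc 1 n, cycleLenWeight α i ℓ = n ! * hseq α n := by
  rw [← sum_exp_neg_cycleWeight]
  exact sum_fiberwise_of_maps_to (fun π _ => mem_Icc.2 ⟨cycleLen_pos π i, cycleLen_le π i⟩) _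

lemma cycleLenWeight_congr {n : ℕ} (i j : Fin n) (ℓ : ℕ) :
    cycleLenWeight α i ℓ = cycleLenWeight α j ℓ := by
  set σ := swap i j
  have hσ : σ j = i := swap_apply_right i j
  rw [cycleLenWeight, cycleLenWeight, sum_filter, sum_filter]
  refine (Fintype.sum_equiv (MulAut.conj σ).toEquiv _ _ fun π => ?_).symm
  simp only [MulEquiv.toEquiv_eq_coe, MulEquiv.coe_toEquiv, MulAut.conj_apply]
  rw [← hσ]
  simp only [cycleLen_conj, cycleWeight_conj]

lemma sum_perm_fin_succ {M : Type*} [AddCommMonoid M] {m : ℕ} (f : Perm (Fin (m + 1)) → M) :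
    ∑ π, f π = ∑ p, ∑ τ, f (decomposeFin.symm (p, τ)) := by
  rw [← Fintype.sum_prod_type']
  exact (Fintype.sum_equiv decomposeFin.symm _ f fun _ => rfl).symm

lemma cycleLenWeight_zero_one (m : ℕ) :
    cycleLenWeight α (0 : Fin (m + 1)) 1 =
      Real.exp (-α 1) * ∑ τ : Perm (Fin m), Real.exp (-cycleWeight α τ) := by
  rw [cycleLenWeight, sum_filter, sum_perm_fin_succ, Fin.sum_univ_succ, mul_sum]
  have hsucc : ∀ (q : Fin m) (τ : Perm (Fin m)),
      cycleLen (decomposeFin.symm (q.succ, τ)) 0 ≠ 1 := fun q τ => by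
    rw [cycleLen_decomposeFin_symm_succ_zero]
    have := cycleLen_pos τ q
    omega
  simp only [cycleLen_decomposeFin_symm_zero_zero, cycleWeight_decomposeFin_symm_zero,
    if_true, hsucc, if_false, sum_const_zero, add_zero, neg_add, Real.exp_add]

lemma cycleLenWeight_zero_succ (m : ℕ) {L : ℕ} (hL : 1 ≤ L) :
    cycleLenWeight α (0 : Fin (m + 1)) (L + 1) =
      Real.exp (α L - α (L + 1)) * ∑ q : Fin m, cycleLenWeight α q L := by
  rw [cycleLenWeight, sum_filter, sum_perm_fin_succ, Fin.sum_univ_succ, mul_sum]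
  have hzero : ∀ τ : Perm (Fin m), cycleLen (decomposeFin.symm (0, τ)) 0 ≠ L + 1 := fun τ => by
    rw [cycleLen_decomposeFin_symm_zero_zero]
    omega
  simp only [hzero, if_false, sum_const_zero, zero_add, cycleLenWeight, sum_filter, mul_sum,
    cycleLen_decomposeFin_symm_succ_zero, add_left_inj, cycleWeight_decomposeFin_symm_succ]
  refine sum_congr rfl fun q _ => sum_congr rfl fun τ _ => ?_
  split_ifs with h
  · rw [h, ← Real.exp_add]
    ring_nf
  · rw [mul_zero]

/- `m! / (m + 1 - ℓ)!` ways to fill the cycle through `0`, times the total weight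
`(m + 1 - ℓ)! h_{m+1-ℓ}` of the permutation of the remaining points. -/
lemma cycleLenWeight_zero {m ℓ : ℕ} (h1 : 1 ≤ ℓ) (h2 : ℓ ≤ m + 1) :
    cycleLenWeight α (0 : Fin (m + 1)) ℓ = m ! * Real.exp (-α ℓ) * hseq α (m + 1 - ℓ) := by
  induction ℓ generalizing m with
  | zero => omega
  | succ L ih =>
    rcases Nat.eq_zero_or_pos L with rfl | hL
    · rw [cycleLenWeight_zero_one, sum_exp_neg_cycleWeight, Nat.add_sub_cancel]
      ring
    obtain ⟨r, rfl⟩ : ∃ r, m = r + 1 := ⟨m - 1, by omega⟩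
    have hq : ∀ q : Fin (r + 1), cycleLenWeight α q L = cycleLenWeight α 0 L :=
      fun q => cycleLenWeight_congr α q 0 L
    rw [cycleLenWeight_zero_succ α _ hL, sum_congr rfl fun q _ => hq q, sum_const, card_univ,
      Fintype.card_fin, ih hL (by omega), nsmul_eq_mul, Nat.factorial_succ,
      show r + 1 + 1 - (L + 1) = r + 1 - L by omega]
    have hexp : Real.exp (α L - α (L + 1)) * Real.exp (-α L) = Real.exp (-α (L + 1)) := by
      rw [← Real.exp_add]
      ring_nf
    push_cast
    linear_combination ((r + 1) * r ! * hseq α (r + 1 - L)) * hexp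

lemma natCast_mul_hseq (n : ℕ) :
    n * hseq α n = ∑ ℓ ∈ Icc 1 n, Real.exp (-α ℓ) * hseq α (n - ℓ) := by
  cases n with
  | zero => simp
  | succ m =>
    have hm : (m ! : ℝ) ≠ 0 := by positivity
    have hsum := sum_cycleLenWeight α (0 : Fin (m + 1))
    rw [sum_congr rfl fun ℓ hℓ => cycleLenWeight_zero α (mem_Icc.1 hℓ).1 (mem_Icc.1 hℓ).2,
      Nat.factorial_succ] at hsum
    simp only [mul_assoc, ← mul_sum] at hsum
    push_cast at hsum
    apply mul_left_cancel₀ hm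
    push_cast
    linear_combination -hsum

end PermutationSums

section ExpSeries

open scoped Nat

variable {K : Type*} [Field K] (b : ℕ → K)

def posTuples (k m : ℕ) : Finset (Fin k → ℕ) :=
  (Finset.Nat.antidiagonalTuple k m).filter (fun ℓ => ∀ i, 1 ≤ ℓ i)

lemma mem_posTuples {k m : ℕ} {ℓ : Fin k → ℕ} :
    ℓ ∈ posTuples k m ↔ ∑ i, ℓ i = m ∧ ∀ i, 1 ≤ ℓ i := by
  rw [posTuples, mem_filter, Finset.Nat.mem_antidiagonalTuple]

lemma posTuples_eq_empty {k m : ℕ} (h : m < k) : posTuples k m = ∅ := by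
  refine eq_empty_of_forall_notMem fun ℓ hℓ => ?_
  obtain ⟨hsum, hpos⟩ := mem_posTuples.1 hℓ
  have : ∑ _i : Fin k, 1 ≤ ∑ i, ℓ i := sum_le_sum fun i _ => hpos i
  simp only [sum_const, card_univ, Fintype.card_fin, smul_eq_mul, mul_one] at this
  omega

lemma sum_posTuples_succ {M : Type*} [AddCommMonoid M] {k m : ℕ} (i : Fin (k + 1))
    (F : ℕ → (Fin k → ℕ) → M) :
    ∑ ℓ ∈ posTuples (k + 1) m, F (ℓ i) (i.removeNth ℓ) =
      ∑ c ∈ Icc 1 m, ∑ ℓ ∈ posTuples k (m - c), F c ℓ := by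
  rw [sum_sigma']
  refine sum_nbij' (fun ℓ => ⟨ℓ i, i.removeNth ℓ⟩) (fun σ => i.insertNth σ.1 σ.2)
    ?_ ?_ (fun ℓ _ => Fin.insertNth_self_removeNth i ℓ) ?_ (fun _ _ => rfl)
  · intro ℓ hℓ
    rw [mem_posTuples, Fin.sum_univ_succAbove _ i] at hℓ
    obtain ⟨hsum, hpos⟩ := hℓ
    simp only [mem_sigma, mem_Icc, mem_posTuples, Fin.removeNth]
    exact ⟨⟨hpos i, by omega⟩, by omega, fun j => hpos _⟩
  · rintro ⟨c, ℓ⟩ hcℓ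
    simp only [mem_sigma, mem_Icc, mem_posTuples] at hcℓ
    obtain ⟨⟨hc1, hcm⟩, hsum, hpos⟩ := hcℓ
    rw [mem_posTuples, Fin.sum_univ_succAbove _ i]
    simp only [Fin.insertNth_apply_same, Fin.insertNth_apply_succAbove]
    refine ⟨by omega, fun j => ?_⟩
    rcases Fin.eq_self_or_eq_succAbove i j with rfl | ⟨j, rfl⟩
    · simpa using hc1
    · simpa using hpos j
  · rintro ⟨c, ℓ⟩ -
    simp

/-- `expCoeff b m` is the coefficient of `x ^ m` in `exp (∑_{ℓ ≥ 1} b ℓ x ^ ℓ / ℓ)` and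
`expTerm b k m` is the contribution of the `k`-th power of the exponent. -/
noncomputable def expTerm (k m : ℕ) : K :=
  (1 / k !) * ∑ ℓ ∈ posTuples k m, ∏ i, b (ℓ i) / ℓ i

noncomputable def expCoeff (m : ℕ) : K := ∑ k ∈ range (m + 1), expTerm b k m

lemma expTerm_of_lt {k m : ℕ} (h : m < k) : expTerm b k m = 0 := by
  rw [expTerm, posTuples_eq_empty h, sum_empty, mul_zero]

lemma expTerm_zero (m : ℕ) : expTerm b 0 m = if m = 0 then 1 else 0 := by
  cases m <;> simp [expTerm, posTuples, Finset.Nat.antidiagonalTuple_zero_succ]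

lemma natCast_mul_expTerm_succ [CharZero K] (k m : ℕ) :
    m * expTerm b (k + 1) m = ∑ c ∈ Icc 1 m, b c * expTerm b k (m - c) := by
  set g : ℕ → K := fun c => b c / c
  have hpoint : ∀ ℓ ∈ posTuples (k + 1) m,
      m * ∏ i, g (ℓ i) = ∑ i, b (ℓ i) * ∏ j, g (i.removeNth ℓ j) := by
    intro ℓ hℓ
    obtain ⟨hsum, hpos⟩ := mem_posTuples.1 hℓ
    rw [← hsum, Nat.cast_sum, sum_mul]
    refine sum_congr rfl fun i _ => ?_
    have hℓi : (ℓ i : K) ≠ 0 := Nat.cast_ne_zero.2 (by have := hpos i; omega)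
    rw [Fin.prod_univ_succAbove _ i, ← mul_assoc, mul_div_cancel₀ _ hℓi]
    rfl
  calc (m : K) * expTerm b (k + 1) m
      = 1 / (k + 1)! * ∑ ℓ ∈ posTuples (k + 1) m, ∑ i, b (ℓ i) * ∏ j, g (i.removeNth ℓ j) := by
        rw [expTerm, mul_left_comm, mul_sum, sum_congr rfl hpoint]
    _ = 1 / (k + 1)! * ∑ _i : Fin (k + 1), ∑ c ∈ Icc 1 m,
          b c * ∑ ℓ ∈ posTuples k (m - c), ∏ j, g (ℓ j) := by
        rw [sum_comm]
        congr 1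
        refine sum_congr rfl fun i _ => ?_
        rw [sum_posTuples_succ i fun c ℓ => b c * ∏ j, g (ℓ j)]
        simp_rw [mul_sum]
    _ = ∑ c ∈ Icc 1 m, b c * expTerm b k (m - c) := by
        simp only [sum_const, card_univ, Fintype.card_fin, nsmul_eq_mul, expTerm, mul_sum,
          Nat.factorial_succ]
        push_cast
        field_simp
        rfl

lemma sum_range_expTerm {j J : ℕ} (h : j ≤ J) :
    ∑ k ∈ range (J + 1), expTerm b k j = expCoeff b j :=
  (sum_subset (range_subset_range.2 (by omega)) fun k hk hkj =>
    expTerm_of_lt b (by simp only [mem_range] at hk hkj; omega)).symm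

lemma natCast_mul_expCoeff [CharZero K] (m : ℕ) :
    m * expCoeff b m = ∑ c ∈ Icc 1 m, b c * expCoeff b (m - c) := by
  cases m with
  | zero => simp
  | succ m =>
    rw [expCoeff, mul_sum, sum_range_succ', expTerm_zero, if_neg m.succ_ne_zero, mul_zero,
      add_zero]
    simp_rw [natCast_mul_expTerm_succ]
    rw [sum_comm]
    refine sum_congr rfl fun c hc => ?_
    rw [← mul_sum, sum_range_expTerm b (by simp only [mem_Icc] at hc; omega)]

end ExpSeries

section Convolution

variable {R : Type*} [CommSemiring R]

lemma sum_Icc_mul_sum_range (u v : ℕ → R) (m : ℕ) :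
    ∑ ℓ ∈ Icc 1 m, u ℓ * ∑ i ∈ range (m - ℓ + 1), v i =
      ∑ j ∈ range (m + 1), ∑ ℓ ∈ Icc 1 j, u ℓ * v (j - ℓ) := by
  have hshift : ∀ ℓ ∈ Icc 1 m,
      ∑ i ∈ range (m - ℓ + 1), v i = ∑ j ∈ Icc ℓ m, v (j - ℓ) := fun ℓ hℓ => by
    rw [← Ico_add_one_right_eq_Icc, sum_Ico_eq_sum_range]
    simp only [mem_Icc] at hℓ
    rw [show m + 1 - ℓ = m - ℓ + 1 by omega]
    simp
  rw [sum_congr rfl fun ℓ hℓ => by rw [hshift ℓ hℓ, mul_sum]]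
  exact sum_comm' fun ℓ j => by simp only [mem_Icc, mem_range]; omega

lemma sum_Icc_one_reflect (v : ℕ → R) (j : ℕ) :
    ∑ ℓ ∈ Icc 1 j, v (j - ℓ) = ∑ i ∈ range j, v i := by
  refine sum_nbij' (j - ·) (j - ·) ?_ ?_ ?_ ?_ fun _ _ => rfl <;>
    intro i hi <;> simp only [mem_Icc, mem_range] at hi ⊢ <;> omega

lemma natCast_mul_sum_range (a : ℕ → R) (m : ℕ) :
    m * ∑ j ∈ range (m + 1), a j = ∑ j ∈ range (m + 1), (j * a j + ∑ i ∈ range j, a i) := by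
  induction m with
  | zero => simp
  | succ m ih =>
    rw [sum_range_succ (fun j => (j : R) * a j + ∑ i ∈ range j, a i), ← ih, sum_range_succ a]
    push_cast
    ring

lemma natCast_mul_sum_range_of_natCast_mul_eq {a b : ℕ → R}
    (ha : ∀ m, m * a m = ∑ ℓ ∈ Icc 1 m, b ℓ * a (m - ℓ)) (m : ℕ) :
    m * ∑ j ∈ range (m + 1), a j =
      ∑ ℓ ∈ Icc 1 m, (b ℓ + 1) * ∑ j ∈ range (m - ℓ + 1), a j := by
  rw [natCast_mul_sum_range, sum_Icc_mul_sum_range]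
  refine sum_congr rfl fun j _ => ?_
  simp only [add_mul, one_mul, sum_add_distrib, ← ha, sum_Icc_one_reflect]

end Convolution

lemma eq_of_natCast_mul_eq {K : Type*} [Field K] [CharZero K] {x y : ℕ → K} (c : ℕ → K)
    (h0 : x 0 = y 0) (hx : ∀ m, m * x m = ∑ ℓ ∈ Icc 1 m, c ℓ * x (m - ℓ))
    (hy : ∀ m, m * y m = ∑ ℓ ∈ Icc 1 m, c ℓ * y (m - ℓ)) : x = y := by
  funext m
  induction m using Nat.strong_induction_on with
  | _ m ih =>
    rcases m with _ | m
    · exact h0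
    refine mul_left_cancel₀ (Nat.cast_ne_zero.2 m.succ_ne_zero) ?_
    rw [hx, hy]
    exact sum_congr rfl fun ℓ hℓ => by rw [ih _ (by simp only [mem_Icc] at hℓ; omega)]

lemma hseq_eq_sum_expCoeff (α : ℕ → ℝ) (n : ℕ) :
    hseq α n = ∑ j ∈ range (n + 1), expCoeff (fun ℓ => Real.exp (-α ℓ) - 1) j := by
  refine congrFun (eq_of_natCast_mul_eq (y := fun n => ∑ j ∈ range (n + 1), expCoeff _ j)
    (fun ℓ => Real.exp (-α ℓ)) ?_ (natCast_mul_hseq α) fun m => ?_) n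
  · simp [hseq_zero, expCoeff, expTerm_zero]
  · simpa using natCast_mul_sum_range_of_natCast_mul_eq
      (natCast_mul_expCoeff fun ℓ => Real.exp (-α ℓ) - 1) m

theorem stmt4_general (α : ℕ → ℝ) (n : ℕ) :
    (hseq α n - hseq α (n - 1) = ∑ k ∈ Finset.Icc 1 n, (1 / (k.factorial : ℝ)) *
      ∑ ℓ ∈ (Finset.Nat.antidiagonalTuple k n).filter (fun ℓ => ∀ i, 1 ≤ ℓ i),
        ∏ i, (Real.exp (-α (ℓ i)) - 1) / (ℓ i : ℝ)) ∧
    (hseq α n = ∑ k ∈ Finset.range (n + 1), (1 / (k.factorial : ℝ)) *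
      ∑ m ∈ Finset.range (n + 1),
        ∑ ℓ ∈ (Finset.Nat.antidiagonalTuple k m).filter (fun ℓ => ∀ i, 1 ≤ ℓ i),
          ∏ i, (Real.exp (-α (ℓ i)) - 1) / (ℓ i : ℝ)) := by
  set b : ℕ → ℝ := fun ℓ => Real.exp (-α ℓ) - 1
  refine ⟨?_, ?_⟩
  · change _ = ∑ k ∈ Icc 1 n, expTerm b k n
    rcases n with _ | m
    · simp
    rw [hseq_eq_sum_expCoeff, hseq_eq_sum_expCoeff, Nat.add_sub_cancel, sum_range_succ,
      add_sub_cancel_left, expCoeff, sum_range_succ', expTerm_zero, if_neg m.succ_ne_zero,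
      add_zero, range_eq_Ico, sum_Ico_add' (expTerm b · (m + 1)), zero_add,
      Ico_add_one_right_eq_Icc]
  · rw [hseq_eq_sum_expCoeff, sum_congr rfl fun k _ => mul_sum _ _ _, sum_comm]
    exact sum_congr rfl fun j hj =>
      (sum_range_expTerm b (Nat.lt_succ_iff.1 (mem_range.1 hj))).symm

/-- Increment formula and its consequence:
`h_n − h_{n−1} = ∑_{k=1}^n (1/k!) ∑_{ℓ_1+…+ℓ_k=n, ℓ_i≥1} ∏_i (e^{-α_{ℓ_i}}−1)/ℓ_i`, and
`h_n = ∑_{k=0}^n (1/k!) ∑_{ℓ_1+…+ℓ_k≤n, ℓ_i≥1} ∏_i (e^{-α_{ℓ_i}}−1)/ℓ_i`. -/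
theorem stmt4 (α : ℕ → ℝ) (n : ℕ) (hn : 1 ≤ n) :
    (hseq α n - hseq α (n - 1) = ∑ k ∈ Finset.Icc 1 n, (1 / (k.factorial : ℝ)) *
      ∑ ℓ ∈ (Finset.Nat.antidiagonalTuple k n).filter (fun ℓ => ∀ i, 1 ≤ ℓ i),
        ∏ i, (Real.exp (-α (ℓ i)) - 1) / (ℓ i : ℝ)) ∧
    (hseq α n = ∑ k ∈ Finset.range (n + 1), (1 / (k.factorial : ℝ)) *
      ∑ m ∈ Finset.range (n + 1),
        ∑ ℓ ∈ (Finset.Nat.antidiagonalTuple k m).filter (fun ℓ => ∀ i, 1 ≤ ℓ i),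
          ∏ i, (Real.exp (-α (ℓ i)) - 1) / (ℓ i : ℝ)) :=
  stmt4_general α n
end

section
/- For every n ≥ 1, h_n ≥ (1/n) e^{−α_1} h_{n−1}, and consequently h_n ≥ e^{−n α_1}/n!. -/
open Finset Filter

/-!
Adjoining a fixed point `0` to a permutation of `Fin m` is an injection `S_m → S_{m+1}` that adds
one `1`-cycle and leaves all other cycles alone, so it multiplies the weight `exp (-∑ α_ℓ r_ℓ)` by
`exp (-α 1)`. Since all weights are positive, the sum over `S_{m+1}` dominates the sum over the
image, giving `(m+1)! h_{m+1} ≥ exp (-α 1) m! h_m`; iterating from `h_0 = 1` gives the second bound.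
-/

theorem Function.minimalPeriod_apply_of_semiconj {α β : Type*} {fa : α → α} {fb : β → β}
    {g : α → β} (hg : Function.Injective g) (h : Function.Semiconj g fa fb) (x : α) :
    Function.minimalPeriod fb (g x) = Function.minimalPeriod fa x := by
  refine Function.minimalPeriod_eq_minimalPeriod_iff.mpr fun k => ?_
  simp only [Function.IsPeriodicPt, Function.IsFixedPt, ← (h.iterate_right k) x, hg.eq_iff]

section ExtendFixZero

variable {m : ℕ}

noncomputable def extendFixZero (σ : Equiv.Perm (Fin m)) : Equiv.Perm (Fin (m + 1)) :=
  Equiv.Perm.decomposeFin.symm (0, σ)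

theorem extendFixZero_apply_zero (σ : Equiv.Perm (Fin m)) : extendFixZero σ 0 = 0 :=
  Equiv.Perm.decomposeFin_symm_apply_zero 0 σ

theorem extendFixZero_apply_succ (σ : Equiv.Perm (Fin m)) (i : Fin m) :
    extendFixZero σ i.succ = (σ i).succ := by
  simp [extendFixZero, Equiv.Perm.decomposeFin_symm_apply_succ]

theorem extendFixZero_injective : Function.Injective (extendFixZero (m := m)) := fun _ _ h =>
  congrArg Prod.snd (Equiv.Perm.decomposeFin.symm.injective h)

theorem cycleLen_extendFixZero_zero (σ : Equiv.Perm (Fin m)) :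
    cycleLen (extendFixZero σ) 0 = 1 :=
  Function.minimalPeriod_eq_one_iff_isFixedPt.mpr (extendFixZero_apply_zero σ)

theorem cycleLen_extendFixZero_succ (σ : Equiv.Perm (Fin m)) (i : Fin m) :
    cycleLen (extendFixZero σ) i.succ = cycleLen σ i :=
  Function.minimalPeriod_apply_of_semiconj (Fin.succ_injective m)
    (fun j => (extendFixZero_apply_succ σ j).symm) i

theorem numCycles_extendFixZero (σ : Equiv.Perm (Fin m)) (ℓ : ℕ) :
    numCycles (extendFixZero σ) ℓ = numCycles σ ℓ + if ℓ = 1 then 1 else 0 := by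
  have hcard : (univ.filter fun i => cycleLen (extendFixZero σ) i = ℓ).card
      = (if 1 = ℓ then 1 else 0) + (univ.filter fun i => cycleLen σ i = ℓ).card := by
    simp only [card_filter, Fin.sum_univ_succ, cycleLen_extendFixZero_zero,
      cycleLen_extendFixZero_succ]
  unfold numCycles
  rw [hcard]
  rcases eq_or_ne ℓ 1 with rfl | h
  · simp [Nat.add_comm]
  · simp [h, h.symm]

end ExtendFixZero

theorem numCycles_eq_zero_of_lt {n ℓ : ℕ} (π : Equiv.Perm (Fin n)) (h : n < ℓ) :
    numCycles π ℓ = 0 :=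
  Nat.div_eq_of_lt <| (card_filter_le _ _).trans_lt (by simpa using h)

theorem cycleWeight_extendFixZero (α : ℕ → ℝ) {m : ℕ} (σ : Equiv.Perm (Fin m)) :
    cycleWeight α (extendFixZero σ) = α 1 + cycleWeight α σ := by
  have htop : α (m + 1) * (numCycles σ (m + 1) : ℝ) = 0 := by
    simp [numCycles_eq_zero_of_lt σ (Nat.lt_succ_self m)]
  simp only [cycleWeight, numCycles_extendFixZero, Nat.cast_add, mul_add, sum_add_distrib]
  rw [sum_Icc_succ_top (Nat.le_add_left 1 m), htop, add_zero, add_comm]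
  congr 1
  simp

theorem exp_neg_mul_sum_le_sum_succ (α : ℕ → ℝ) (m : ℕ) :
    Real.exp (-α 1) * ∑ σ : Equiv.Perm (Fin m), Real.exp (-cycleWeight α σ)
      ≤ ∑ τ : Equiv.Perm (Fin (m + 1)), Real.exp (-cycleWeight α τ) :=
  calc Real.exp (-α 1) * ∑ σ : Equiv.Perm (Fin m), Real.exp (-cycleWeight α σ)
      = ∑ τ ∈ univ.image extendFixZero, Real.exp (-cycleWeight α τ) := by
        rw [mul_sum, sum_image fun _ _ _ _ h => extendFixZero_injective h]
        refine sum_congr rfl fun σ _ => ?_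
        rw [cycleWeight_extendFixZero, ← Real.exp_add, neg_add]
    _ ≤ ∑ τ : Equiv.Perm (Fin (m + 1)), Real.exp (-cycleWeight α τ) :=
        sum_le_sum_of_subset_of_nonneg (subset_univ _) fun _ _ _ => (Real.exp_pos _).le

theorem le_hseq_succ (α : ℕ → ℝ) (m : ℕ) :
    1 / ((m : ℝ) + 1) * Real.exp (-α 1) * hseq α m ≤ hseq α (m + 1) := by
  have hsum := exp_neg_mul_sum_le_sum_succ α m
  calc 1 / ((m : ℝ) + 1) * Real.exp (-α 1) * hseq α m
      = 1 / (((m + 1).factorial : ℕ) : ℝ) *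
          (Real.exp (-α 1) * ∑ σ : Equiv.Perm (Fin m), Real.exp (-cycleWeight α σ)) := by
        rw [hseq, Nat.factorial_succ]
        push_cast
        field_simp
    _ ≤ hseq α (m + 1) := mul_le_mul_of_nonneg_left hsum (by positivity)

theorem exp_neg_mul_div_factorial_le_hseq (α : ℕ → ℝ) (n : ℕ) :
    Real.exp (-(n : ℝ) * α 1) / (n.factorial : ℝ) ≤ hseq α n := by
  induction n with
  | zero => simp [hseq, cycleWeight]
  | succ m ih =>
    have hexp : Real.exp (-((m + 1 : ℕ) : ℝ) * α 1)
        = Real.exp (-α 1) * Real.exp (-(m : ℝ) * α 1) := by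
      rw [← Real.exp_add]
      push_cast
      ring_nf
    calc Real.exp (-((m + 1 : ℕ) : ℝ) * α 1) / ((m + 1).factorial : ℝ)
        = 1 / ((m : ℝ) + 1) * Real.exp (-α 1) * (Real.exp (-(m : ℝ) * α 1) / m.factorial) := by
          rw [hexp, Nat.factorial_succ]
          push_cast
          field_simp
      _ ≤ 1 / ((m : ℝ) + 1) * Real.exp (-α 1) * hseq α m := by gcongr
      _ ≤ hseq α (m + 1) := le_hseq_succ α m

/-- `h_n ≥ (1/n) e^{−α_1} h_{n−1}` and consequently `h_n ≥ e^{−n α_1}/n!`, for `n ≥ 1`. -/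
theorem stmt7 (α : ℕ → ℝ) (n : ℕ) (hn : 1 ≤ n) :
    (1 / (n : ℝ)) * Real.exp (-α 1) * hseq α (n - 1) ≤ hseq α n ∧
    Real.exp (-(n : ℝ) * α 1) / (n.factorial : ℝ) ≤ hseq α n := by
  obtain ⟨m, rfl⟩ : ∃ m, n = m + 1 := ⟨n - 1, by omega⟩
  refine ⟨?_, exp_neg_mul_div_factorial_le_hseq α (m + 1)⟩
  simpa using le_hseq_succ α m
end

section
/- If the sequence (α_ℓ) is subadditive, i.e. α_{ℓ_1+…+ℓ_k} ≤ α_{ℓ_1} + … + α_{ℓ_k} for all ℓ_1,…,ℓ_k ≥ 1, then h_n ≤ e^{−α_n} for all n ≥ 1; if (α_ℓ) is superadditive, i.e. α_{ℓ_1+…+ℓ_k} ≥ α_{ℓ_1} + … + α_{ℓ_k}, then h_n ≥ e^{−α_n} for all n ≥ 1. -/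
open Finset Filter

/-!
The cycle lengths of a permutation `π ∈ S_n` form a composition of `n`, and the cycle weight
`∑_ℓ α_ℓ r_ℓ(π)` is the sum of `α` over its parts. Subadditivity therefore bounds every term
`exp(-∑_ℓ α_ℓ r_ℓ(π))` of the average `h_n` by `e^{-α_n}`, and superadditivity bounds it below.
-/

open scoped BigOperators

theorem Finset.dvd_card_filter_card_eq {ι : Type*} [Fintype ι] [DecidableEq ι]
    (c : ι → Finset ι) (mem_self : ∀ x, x ∈ c x) (eq_of_mem : ∀ x y, y ∈ c x → c y = c x)
    (ℓ : ℕ) : ℓ ∣ #{x | #(c x) = ℓ} := by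
  set s : Finset ι := {x | #(c x) = ℓ}
  rw [card_eq_sum_card_fiberwise fun x hx => mem_image_of_mem c hx]
  refine dvd_sum fun t ht => ?_
  obtain ⟨x, hx, rfl⟩ := mem_image.mp ht
  have hx : #(c x) = ℓ := (mem_filter.mp hx).2
  have hfiber : s.filter (fun y => c y = c x) = c x := by
    ext y
    simp only [s, mem_filter, mem_univ, true_and]
    refine ⟨fun ⟨_, hy⟩ => hy ▸ mem_self y, fun hy => ?_⟩
    rw [eq_of_mem x y hy]
    exact ⟨hx, rfl⟩
  rw [hfiber, hx]

theorem Multiset.exists_eq_map_univ_fin {β : Type*} (s : Multiset β) :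
    ∃ k, ∃ ℓ : Fin k → β, s = univ.val.map ℓ :=
  ⟨_, s.toList.get, by rw [Fin.univ_val_map, List.ofFn_get, Multiset.coe_toList]⟩

namespace Equiv.Perm

open MulAction Subgroup

variable {n : ℕ} (π : Equiv.Perm (Fin n))

open scoped Classical in
lemma cycleLen_eq_card_orbit (x : Fin n) :
    cycleLen π x = #(orbit (zpowers π) x).toFinset := by
  rw [cycleLen, Set.toFinset_card, ← minimalPeriod_eq_card]
  rfl

/-- `numCycles` divides by `ℓ` with truncation; this makes the division exact. -/
lemma dvd_card_filter_cycleLen_eq (ℓ : ℕ) : ℓ ∣ #{x | cycleLen π x = ℓ} := by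
  classical
  have key := dvd_card_filter_card_eq (fun x : Fin n => (orbit (zpowers π) x).toFinset)
    (fun x => Set.mem_toFinset.mpr (mem_orbit_self x))
    (fun x y hy => Set.toFinset_congr (orbit_eq_iff.mpr (Set.mem_toFinset.mp hy))) ℓ
  convert key using 4 with x
  exact cycleLen_eq_card_orbit π x

lemma cycleLen_mem_Icc (x : Fin n) : cycleLen π x ∈ Icc 1 n := by
  classical
  rw [mem_Icc, cycleLen_eq_card_orbit, Nat.one_le_iff_ne_zero]
  exact ⟨by simpa using ⟨x, mem_orbit_self x⟩, (card_le_univ _).trans (by simp)⟩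

lemma sum_mul_numCycles : ∑ ℓ ∈ Icc 1 n, ℓ * numCycles π ℓ = n := by
  classical
  calc ∑ ℓ ∈ Icc 1 n, ℓ * numCycles π ℓ = ∑ ℓ ∈ Icc 1 n, #{x | cycleLen π x = ℓ} :=
        sum_congr rfl fun ℓ _ => Nat.mul_div_cancel' (dvd_card_filter_cycleLen_eq π ℓ)
    _ = n := by
        rw [← card_eq_sum_card_fiberwise fun x _ => cycleLen_mem_Icc π x, card_univ,
          Fintype.card_fin]

noncomputable def cycleLengths : Multiset ℕ :=
  ∑ ℓ ∈ Icc 1 n, Multiset.replicate (numCycles π ℓ) ℓ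

lemma one_le_of_mem_cycleLengths {ℓ : ℕ} (h : ℓ ∈ cycleLengths π) : 1 ≤ ℓ := by
  obtain ⟨m, hm, h⟩ := Multiset.mem_sum.mp h
  rw [Multiset.eq_of_mem_replicate h]
  exact (mem_Icc.mp hm).1

lemma sum_map_cycleLengths {M : Type*} [AddCommMonoid M] (f : ℕ → M) :
    ((cycleLengths π).map f).sum = ∑ ℓ ∈ Icc 1 n, numCycles π ℓ • f ℓ := by
  rw [cycleLengths, ← Multiset.coe_mapAddMonoidHom, map_sum, ← Multiset.coe_sumAddMonoidHom,
    map_sum]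
  simp

lemma sum_cycleLengths : (cycleLengths π).sum = n := by
  rw [← Multiset.map_id (cycleLengths π), sum_map_cycleLengths]
  simpa only [smul_eq_mul, id, mul_comm] using sum_mul_numCycles π

lemma cycleWeight_eq_sum_map_cycleLengths (α : ℕ → ℝ) :
    cycleWeight α π = ((cycleLengths π).map α).sum := by
  simp [sum_map_cycleLengths, cycleWeight, mul_comm]

lemma exists_fin_tuple_cycleWeight (α : ℕ → ℝ) (hn : 1 ≤ n) :
    ∃ k, 1 ≤ k ∧ ∃ ℓ : Fin k → ℕ,
      (∀ i, 1 ≤ ℓ i) ∧ ∑ i, ℓ i = n ∧ cycleWeight α π = ∑ i, α (ℓ i) := by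
  obtain ⟨k, ℓ, hℓ⟩ := (cycleLengths π).exists_eq_map_univ_fin
  have hsum : ∑ i, ℓ i = n := by
    have := sum_cycleLengths π
    rwa [hℓ] at this
  refine ⟨k, ?_, ℓ, fun i => one_le_of_mem_cycleLengths π ?_, hsum, ?_⟩
  · refine Nat.one_le_iff_ne_zero.mpr ?_
    rintro rfl
    simp at hsum
    omega
  · rw [hℓ]
    exact Multiset.mem_map_of_mem _ (mem_univ i)
  · rw [cycleWeight_eq_sum_map_cycleLengths, hℓ, Multiset.map_map]
    rfl

end Equiv.Perm

lemma hseq_eq_expect (α : ℕ → ℝ) (n : ℕ) :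
    hseq α n = 𝔼 π : Equiv.Perm (Fin n), Real.exp (-cycleWeight α π) := by
  rw [hseq, expect_eq_sum_div_card, card_univ, Fintype.card_perm, Fintype.card_fin,
    one_div_mul_eq_div]

/-- If `(α_ℓ)` is subadditive then `h_n ≤ e^{−α_n}`; if it is superadditive then `h_n ≥ e^{−α_n}`. -/
theorem stmt9 (α : ℕ → ℝ) (n : ℕ) (hn : 1 ≤ n) :
    ((∀ k : ℕ, 1 ≤ k → ∀ ℓ : Fin k → ℕ, (∀ i, 1 ≤ ℓ i) →
        α (∑ i, ℓ i) ≤ ∑ i, α (ℓ i)) → hseq α n ≤ Real.exp (-α n)) ∧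
    ((∀ k : ℕ, 1 ≤ k → ∀ ℓ : Fin k → ℕ, (∀ i, 1 ≤ ℓ i) →
        ∑ i, α (ℓ i) ≤ α (∑ i, ℓ i)) → Real.exp (-α n) ≤ hseq α n) := by
  rw [hseq_eq_expect]
  constructor
  · refine fun hsub => expect_le univ_nonempty fun π _ => Real.exp_le_exp.mpr ?_
    obtain ⟨k, hk, ℓ, hℓ, hsum, hweight⟩ := π.exists_fin_tuple_cycleWeight α hn
    simpa [hsum, hweight] using hsub k hk ℓ hℓ
  · refine fun hsup => le_expect univ_nonempty fun π _ => Real.exp_le_exp.mpr ?_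
    obtain ⟨k, hk, ℓ, hℓ, hsum, hweight⟩ := π.exists_fin_tuple_cycleWeight α hn
    simpa [hsum, hweight] using hsup k hk ℓ hℓ
end
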